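/- arXiv:0911.4136 — 2 statements merged into one kernel-verified Lean document; each statement's English description precedes it below -/
import Mathlib

section
/- Let L be the proper part of a finite lattice 𝓛, and let M be the set of all elements x ∈ L such that x = ⋀_{c∈C} c for some nonempty subset C of the set of maximal elements of L (the meet taken in 𝓛). Let R be the proper part of a sublattice of 𝓛 with M ⊆ R ⊆ L. Then ΔL and ΔR are homotopy equivalent. -/
/-- The geometric realization of the order complex of the subposet of `P` induced on `S`:
functions `P → ℝ` that are nonnegative, finitely supported, sum to `1`, and whose support is
a chain contained in `S`. Simplices are exactly the finite chains of `S`. -/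
def ocSet (P : Type) [Preorder P] (S : Set P) : Set (P → ℝ) :=
  {f | (∀ x, 0 ≤ f x) ∧ (Function.support f).Finite ∧ (∑ᶠ x, f x) = 1 ∧
    Function.support f ⊆ S ∧ IsChain (· ≤ ·) (Function.support f)}

/-- The order complex `Δ S` of the subposet induced on `S`, as a topological space. -/
abbrev ΔSp {P : Type} [Preorder P] (S : Set P) : Type := ↥(ocSet P S)

lemma ocSet_mono {P : Type} [Preorder P] {S T : Set P} (h : S ⊆ T) :
    ocSet P S ⊆ ocSet P T :=
  fun _ hf => ⟨hf.1, hf.2.1, hf.2.2.1, hf.2.2.2.1.trans h, hf.2.2.2.2⟩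

/-- The inclusion of order complexes induced by `S ⊆ T`. -/
def ΔIncl {P : Type} [Preorder P] {S T : Set P} (h : S ⊆ T) : C(ΔSp S, ΔSp T) :=
  ⟨Set.inclusion (ocSet_mono h), continuous_inclusion (ocSet_mono h)⟩

/-!
Write `c x` for the meet of the maximal elements of `L` above `x`. Then `c` is monotone and
extensive, maps `L` into `M` and fixes `M`; since `M ⊆ R ⊆ L`, it is a retraction of `L` and of `R`
onto `M`. Both retractions are homotopy equivalences of order complexes because monotone maps
`φ ≤ ψ` induce homotopic maps: change `φ` into `ψ` one vertex at a time along an increasing chain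
of upper sets; consecutive maps send every chain into a chain, so the straight-line homotopy stays
in the order complex.
-/

open Set Function

section SimplicialMap

variable {P Q : Type} [Fintype P]

open Classical in
/-- Pushforward of barycentric coordinates, i.e. the affine extension of the vertex map `φ`. -/
noncomputable def ocPush (φ : P → Q) (f : P → ℝ) : Q → ℝ :=
  fun y => ∑ x with φ x = y, f x

variable {φ : P → Q} {f : P → ℝ}

lemma ocPush_nonneg (hf : ∀ x, 0 ≤ f x) (y : Q) : 0 ≤ ocPush φ f y :=
  Finset.sum_nonneg fun x _ => hf x

lemma support_ocPush_subset : support (ocPush φ f) ⊆ φ '' support f := by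
  classical
  intro y hy
  obtain ⟨x, hx, hfx⟩ := Finset.exists_ne_zero_of_sum_ne_zero hy
  exact ⟨x, hfx, (Finset.mem_filter.1 hx).2⟩

lemma finsum_ocPush : ∑ᶠ y, ocPush φ f y = ∑ x, f x := by
  classical
  rw [finsum_eq_sum_of_support_subset _ (s := Finset.univ.image φ)]
  · exact Finset.sum_fiberwise_of_maps_to
      (fun x _ => Finset.mem_image_of_mem φ (Finset.mem_univ x)) f
  · exact support_ocPush_subset.trans (by simp)

lemma ocPush_eq_self {φ : P → P} (h : EqOn φ id (support f)) : ocPush φ f = f := by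
  classical
  funext y
  rw [ocPush, Finset.sum_eq_single y]
  · intro x hx hxy
    by_contra hfx
    exact hxy ((h hfx).symm.trans (Finset.mem_filter.1 hx).2)
  · intro hy
    by_contra hfy
    exact hy (Finset.mem_filter.2 ⟨Finset.mem_univ y, h hfy⟩)

lemma continuous_ocPush : Continuous (ocPush (P := P) φ) :=
  continuous_pi fun _ => continuous_finsetSum _ fun x _ => continuous_apply x

variable [Preorder P] [Preorder Q] {S : Set P} {T : Set Q}

lemma ocPush_mem (hφ : Monotone φ) (hST : MapsTo φ S T) (hf : f ∈ ocSet P S) :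
    ocPush φ f ∈ ocSet Q T := by
  obtain ⟨hf0, -, hf1, hfS, hfC⟩ := hf
  refine ⟨ocPush_nonneg hf0, (toFinite _).image φ |>.subset support_ocPush_subset, ?_,
    support_ocPush_subset.trans ?_, (hφ.isChain_image hfC).mono support_ocPush_subset⟩
  · rwa [finsum_ocPush, ← finsum_eq_sum_of_fintype]
  · exact (hST.mono_left hfS).image_subset

noncomputable def ΔMap (φ : P → Q) (hφ : Monotone φ) (hST : MapsTo φ S T) :
    C(ΔSp S, ΔSp T) :=
  ⟨fun f => ⟨ocPush φ f, ocPush_mem hφ hST f.2⟩,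
    (continuous_ocPush.comp continuous_subtype_val).subtype_mk _⟩

end SimplicialMap

section Homotopy

variable {P : Type} [Preorder P] {S : Set P}

lemma lineMap_mem_ocSet {f g : P → ℝ} (hf : f ∈ ocSet P S) (hg : g ∈ ocSet P S)
    (hfg : IsChain (· ≤ ·) (support f ∪ support g)) {t : ℝ} (ht : t ∈ Icc 0 1) :
    AffineMap.lineMap f g t ∈ ocSet P S := by
  obtain ⟨hf0, hfin, hf1, hfS, -⟩ := hf
  obtain ⟨hg0, hgin, hg1, hgS, -⟩ := hg
  have hsupp : support (AffineMap.lineMap f g t : P → ℝ) ⊆ support f ∪ support g := by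
    rw [AffineMap.lineMap_apply_module]
    exact (support_add _ _).trans (union_subset_union (support_const_smul_subset _ _)
      (support_const_smul_subset _ _))
  refine ⟨fun x => ?_, (hfin.union hgin).subset hsupp, ?_,
    hsupp.trans (union_subset hfS hgS), hfg.mono hsupp⟩
  · simp only [AffineMap.lineMap_apply_module, Pi.add_apply, Pi.smul_apply, smul_eq_mul]
    exact add_nonneg (mul_nonneg (sub_nonneg.2 ht.2) (hf0 x)) (mul_nonneg ht.1 (hg0 x))
  · simp only [AffineMap.lineMap_apply_module, Pi.add_apply, Pi.smul_apply, smul_eq_mul]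
    rw [finsum_add_distrib (hfin.subset (support_mul_subset_right _ _))
      (hgin.subset (support_mul_subset_right _ _)), ← mul_finsum, ← mul_finsum, hf1, hg1]
    ring

theorem homotopic_of_isChain_support_union {X : Type*} [TopologicalSpace X]
    (F G : C(X, ΔSp S))
    (h : ∀ x, IsChain (· ≤ ·) (support (F x : P → ℝ) ∪ support (G x : P → ℝ))) :
    F.Homotopic G := by
  let H := ContinuousMap.Homotopy.affine (⟨fun x => F x, by fun_prop⟩ : C(X, P → ℝ))
    ⟨fun x => G x, by fun_prop⟩
  exact ⟨{
    toFun := fun p => ⟨H p, lineMap_mem_ocSet (F p.2).2 (G p.2).2 (h p.2) p.1.2⟩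
    continuous_toFun := H.continuous.subtype_mk _
    map_zero_left := fun x => Subtype.ext (H.apply_zero x)
    map_one_left := fun x => Subtype.ext (H.apply_one x) }⟩

end Homotopy

section Contiguity

variable {P Q : Type} [Preorder Q] {φ ψ : P → Q}

lemma isChain_image_union_of_le_of_eqOn_compl [Preorder P] (hφ : Monotone φ) (hψ : Monotone ψ)
    (hle : φ ≤ ψ) {p : P} (hp : EqOn φ ψ {p}ᶜ) {C : Set P} (hC : IsChain (· ≤ ·) C) :
    IsChain (· ≤ ·) (φ '' C ∪ ψ '' C) := by
  refine isChain_union.2 ⟨hφ.isChain_image hC, hψ.isChain_image hC, ?_⟩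
  rintro _ ⟨x, hx, rfl⟩ _ ⟨y, hy, rfl⟩ -
  rcases hC.total hx hy with hxy | hyx
  · exact Or.inl ((hφ hxy).trans (hle y))
  by_cases hyp : y = p
  · by_cases hxp : x = p
    · exact Or.inl (hxp.trans hyp.symm ▸ hle x)
    · exact Or.inr ((hψ hyx).trans (hp hxp).ge)
  · exact Or.inr ((hp hyp).ge.trans (hφ hyx))

lemma monotone_piecewise_of_le [Preorder P] (hφ : Monotone φ) (hψ : Monotone ψ) (hle : φ ≤ ψ)
    {U : Finset P} [∀ x, Decidable (x ∈ U)] (hU : IsUpperSet (U : Set P)) :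
    Monotone (U.piecewise ψ φ) := by
  intro x y hxy
  by_cases hy : y ∈ U
  · by_cases hx : x ∈ U
    · simpa [hx, hy] using hψ hxy
    · simpa [hx, hy] using (hφ hxy).trans (hle y)
  · have hx : x ∉ U := fun hx => hy (hU hxy hx)
    simpa [hx, hy] using hφ hxy

variable [PartialOrder P] [Fintype P] {S : Set P} {T : Set Q}

theorem ΔMap_homotopic_of_le (hφ : Monotone φ) (hψ : Monotone ψ) (hφST : MapsTo φ S T)
    (hψST : MapsTo ψ S T) (hle : φ ≤ ψ) :
    (ΔMap φ hφ hφST).Homotopic (ΔMap ψ hψ hψST) := by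
  classical
  have hST (U : Finset P) : MapsTo (U.piecewise ψ φ) S T := fun x hx => by
    by_cases h : x ∈ U <;> simp [h, hφST hx, hψST hx]
  suffices staged : ∀ (U : Finset P) (hU : IsUpperSet (U : Set P)),
      (ΔMap φ hφ hφST).Homotopic
        (ΔMap (U.piecewise ψ φ) (monotone_piecewise_of_le hφ hψ hle hU) (hST U)) by
    convert staged Finset.univ (by simp [isUpperSet_univ]) using 2
    exact (Finset.piecewise_univ ψ φ).symm
  intro U
  induction U using Finset.strongInduction with
  | H U ih =>
    intro hU
    obtain rfl | hne := U.eq_empty_or_nonempty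
    · convert ContinuousMap.Homotopic.refl (ΔMap φ hφ hφST) using 2
      exact Finset.piecewise_empty ψ φ
    obtain ⟨p, hp⟩ := U.exists_minimal hne
    have hU' : IsUpperSet (U.erase p : Set P) := by
      rw [Finset.coe_erase]
      exact hU.erase fun b hb hbp => hp.eq_of_le hb hbp
    refine (ih _ (Finset.erase_ssubset hp.prop) hU').trans
      (homotopic_of_isChain_support_union _ _ fun f => ?_)
    refine ((isChain_image_union_of_le_of_eqOn_compl (p := p)
      (monotone_piecewise_of_le hφ hψ hle hU') (monotone_piecewise_of_le hφ hψ hle hU) ?_ ?_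
      f.2.2.2.2.2).mono
      (union_subset_union support_ocPush_subset support_ocPush_subset))
    · intro x
      by_cases hx : x ∈ U <;> rcases eq_or_ne x p with rfl | hxp <;> simp [*, hle x]
    · intro x hx
      simp [Finset.piecewise, Finset.mem_erase, show x ≠ p from hx]

end Contiguity

section Retraction

variable {P : Type} [PartialOrder P] [Fintype P] {S T : Set P}

lemma ΔMap_eq_id {φ : P → P} (hφ : Monotone φ) (hSS : MapsTo φ S S) (hfix : EqOn φ id S) :
    ΔMap φ hφ hSS = ContinuousMap.id (ΔSp S) :=
  ContinuousMap.ext fun f => Subtype.ext (ocPush_eq_self (hfix.mono f.2.2.2.2.1))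

open ContinuousMap in
noncomputable def ΔHomotopyEquivOfRetraction (hTS : T ⊆ S) {c : P → P} (hc : Monotone c)
    (hle : id ≤ c) (hST : MapsTo c S T) (hfix : EqOn c id T) : ΔSp S ≃ₕ ΔSp T where
  toFun := ΔMap c hc hST
  invFun := ΔIncl hTS
  left_inv := by
    rw [← ΔMap_eq_id monotone_id (mapsTo_id S) (eqOn_refl id S)]
    exact (ΔMap_homotopic_of_le monotone_id hc (mapsTo_id S) (hST.mono_right hTS) hle).symm
  right_inv := by
    rw [← ΔMap_eq_id hc (hST.mono_left hTS) hfix]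
    exact .refl _

end Retraction

lemma maximal_mem_iff_forall_not_lt {α : Type*} [Preorder α] {s : Set α} {a : α} :
    Maximal (· ∈ s) a ↔ a ∈ s ∧ ∀ b ∈ s, ¬ a < b := by
  simp only [maximal_iff_forall_gt, imp_not_comm]

section MaximalsInf

variable {α : Type*} [SemilatticeInf α] [Finite α] {L : Set α} {x m : α}

noncomputable def maximalsAbove (L : Set α) (x : α) : Finset α :=
  (toFinite {m | Maximal (· ∈ L) m ∧ x ≤ m}).toFinset

@[simp]
lemma mem_maximalsAbove : m ∈ maximalsAbove L x ↔ Maximal (· ∈ L) m ∧ x ≤ m :=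
  Finite.mem_toFinset _

variable [OrderTop α]

noncomputable def maximalsInfAbove (L : Set α) (x : α) : α :=
  (maximalsAbove L x).inf id

lemma maximalsInfAbove_le (hm : Maximal (· ∈ L) m) (hxm : x ≤ m) : maximalsInfAbove L x ≤ m :=
  Finset.inf_le (f := id) (mem_maximalsAbove.2 ⟨hm, hxm⟩)

lemma le_maximalsInfAbove (L : Set α) (x : α) : x ≤ maximalsInfAbove L x :=
  Finset.le_inf fun _ hm => (mem_maximalsAbove.1 hm).2

lemma monotone_maximalsInfAbove (L : Set α) : Monotone (maximalsInfAbove L) :=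
  fun _ _ hxy => Finset.le_inf fun _ hm =>
    maximalsInfAbove_le (mem_maximalsAbove.1 hm).1 (hxy.trans (mem_maximalsAbove.1 hm).2)

lemma maximalsInfAbove_inf {C : Finset α} (hC : ∀ c ∈ C, Maximal (· ∈ L) c) :
    maximalsInfAbove L (C.inf id) = C.inf id :=
  le_antisymm (Finset.le_inf fun c hc => maximalsInfAbove_le (hC c hc) (Finset.inf_le hc))
    (le_maximalsInfAbove L _)

lemma maximalsInfAbove_mem (hL : L.OrdConnected) (hx : x ∈ L) : maximalsInfAbove L x ∈ L := by
  obtain ⟨m, hxm, hm⟩ := Finite.exists_le_maximal (p := (· ∈ L)) hx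
  exact hL.out hx hm.prop ⟨le_maximalsInfAbove L x, maximalsInfAbove_le hm hxm⟩

lemma exists_maximalsInfAbove_eq_inf (hx : x ∈ L) : ∃ C : Finset α, C.Nonempty ∧
    (∀ c ∈ C, Maximal (· ∈ L) c) ∧ maximalsInfAbove L x = C.inf id := by
  obtain ⟨m, hxm, hm⟩ := Finite.exists_le_maximal (p := (· ∈ L)) hx
  exact ⟨maximalsAbove L x, ⟨m, mem_maximalsAbove.2 ⟨hm, hxm⟩⟩,
    fun c hc => (mem_maximalsAbove.1 hc).1, rfl⟩

end MaximalsInf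

theorem orderComplex_homotopyEquiv_of_properPart_sublattice_general
    (𝓛 : Type) [Lattice 𝓛] [Finite 𝓛] [BoundedOrder 𝓛]
    (L : Set 𝓛) (hL : L = {x | x ≠ ⊥ ∧ x ≠ ⊤})
    (M : Set 𝓛)
    (hM : M = {x | x ∈ L ∧ ∃ C : Finset 𝓛, C.Nonempty ∧
      (∀ c ∈ C, c ∈ L ∧ ∀ y ∈ L, ¬ c < y) ∧ x = C.inf id})
    (R : Set 𝓛)
    (hMR : M ⊆ R) (hRL : R ⊆ L) :
    Nonempty (ContinuousMap.HomotopyEquiv (ΔSp L) (ΔSp R)) := by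
  have := Fintype.ofFinite 𝓛
  simp only [← maximal_mem_iff_forall_not_lt] at hM
  have hLconn : L.OrdConnected := hL ▸ ⟨fun _ hx _ hy _ hz =>
    ⟨ne_bot_of_le_ne_bot hx.1 hz.1, ne_top_of_le_ne_top hy.2 hz.2⟩⟩
  have hML : M ⊆ L := hM ▸ fun _ hx => hx.1
  have hLM : MapsTo (maximalsInfAbove L) L M := fun x hx => by
    rw [hM]
    exact ⟨maximalsInfAbove_mem hLconn hx, exists_maximalsInfAbove_eq_inf hx⟩
  have hfix : EqOn (maximalsInfAbove L) id M := by
    rintro _ hx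
    rw [hM] at hx
    obtain ⟨-, C, -, hC, rfl⟩ := hx
    exact maximalsInfAbove_inf hC
  have hc := monotone_maximalsInfAbove L
  have hle : id ≤ maximalsInfAbove L := le_maximalsInfAbove L
  exact ⟨(ΔHomotopyEquivOfRetraction hML hc hle hLM hfix).trans
    (ΔHomotopyEquivOfRetraction hMR hc hle (hLM.mono_left hRL) hfix).symm⟩

/-- Let `L` be the proper part of a finite lattice `𝓛`, and `M` the set of all
elements `x ∈ L` that are meets of nonempty sets of maximal elements of `L`. If `R` is the
proper part of a sublattice of `𝓛` with `M ⊆ R ⊆ L`, then `ΔL ≃ ΔR`. -/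
theorem orderComplex_homotopyEquiv_of_properPart_sublattice
    (𝓛 : Type) [Lattice 𝓛] [Finite 𝓛] [BoundedOrder 𝓛]
    (L : Set 𝓛) (hL : L = {x | x ≠ ⊥ ∧ x ≠ ⊤})
    (M : Set 𝓛)
    (hM : M = {x | x ∈ L ∧ ∃ C : Finset 𝓛, C.Nonempty ∧
      (∀ c ∈ C, c ∈ L ∧ ∀ y ∈ L, ¬ c < y) ∧ x = C.inf id})
    (R : Set 𝓛) (S : Sublattice 𝓛) (hbot : ⊥ ∈ S) (htop : ⊤ ∈ S)
    (hR : R = (S : Set 𝓛) \ {⊥, ⊤})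
    (hMR : M ⊆ R) (hRL : R ⊆ L) :
    Nonempty (ContinuousMap.HomotopyEquiv (ΔSp L) (ΔSp R)) :=
  orderComplex_homotopyEquiv_of_properPart_sublattice_general 𝓛 L hL M hM R hMR hRL
end

section
/- Let P be a finite poset, k ≥ 0, h ∈ P^{k+1}, and X_h = Δ(P^{≤k} ∪ {h}). Then the quotient space X_h / ΔP^{≤k} is homeomorphic to the suspension Σ ΔP_{<h}. -/
/-- The topological join `X * Y`: the double mapping cylinder of `X ← X × I × Y → Y`
(so that `X * ∅ = X` and `∅ * Y = Y`). -/
abbrev TopJoin (X Y : Type) [TopologicalSpace X] [TopologicalSpace Y] : Type :=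
  Quot (fun a b : (X ⊕ (X × unitInterval × Y)) ⊕ Y =>
    (∃ x y, a = Sum.inl (Sum.inr (x, 0, y)) ∧ b = Sum.inl (Sum.inl x)) ∨
    (∃ x y, a = Sum.inl (Sum.inr (x, 1, y)) ∧ b = Sum.inr y))

/-- The (unreduced) suspension `Σ X = S⁰ * X`. -/
abbrev Susp (X : Type) [TopologicalSpace X] : Type := TopJoin Bool X

/-- The wedge (one-point union) of two pointed spaces. -/
abbrev Wedge (X Y : Type) [TopologicalSpace X] [TopologicalSpace Y] (x0 : X) (y0 : Y) : Type :=
  Quot (fun a b : X ⊕ Y => a = Sum.inl x0 ∧ b = Sum.inr y0)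

/-- The wedge of a family of pointed spaces (with an auxiliary base point glued to all the
base points of the family, so that the empty wedge is a one-point space). -/
abbrev BigWedge {ι : Type} (X : ι → Type) [∀ i, TopologicalSpace (X i)] (pt : ∀ i, X i) : Type :=
  Quot (fun a b : (Σ i, X i) ⊕ Unit => (∃ i, a = Sum.inl ⟨i, pt i⟩) ∧ b = Sum.inr ())

/-- The base point of a wedge of a family. -/
def BigWedge.base {ι : Type} {X : ι → Type} [∀ i, TopologicalSpace (X i)] {pt : ∀ i, X i} :
    BigWedge X pt :=
  Quot.mk _ (Sum.inr ())
/-- The quotient space `X/A` (based: an external base point is glued to all points of `A`). -/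
abbrev QuotBy (X : Type) [TopologicalSpace X] (A : Set X) : Type :=
  Quot (fun a b : X ⊕ Unit => (∃ x ∈ A, a = Sum.inl x) ∧ b = Sum.inr ())
/-- `P^{≤ k}`: elements of height at most `k` (i.e. every chain `x₀ < … < x_{k'-1} < h`
has `k' ≤ k`). -/
def levelLE (P : Type) [PartialOrder P] (k : ℕ) : Set P :=
  {x | Order.height x ≤ (k : ℕ∞)}

/-- The `k`-th level `P^k = P^{≤k} \ P^{≤k-1}`: elements of height exactly `k`. -/
def level (P : Type) [PartialOrder P] (k : ℕ) : Set P :=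
  {x | Order.height x = (k : ℕ∞)}

/-!
Both spaces embed in `ℝ × (P → ℝ)` with the same image
`{(t, t(1-t) w) | t ∈ [0,1], w ∈ Δ P_{<h}}`. A point `f` of `Δ(P^{≤k} ∪ {h})` goes to
`(f h, f h • f|_{P ∖ {h}})`; this collapses exactly `Δ P^{≤k} = {f | f h = 0}`, and writing
`f = t δ_h + (1 - t) w` shows that the image is as claimed, because the elements of `P^{≤k}`
comparable with `h` are exactly those of `P_{<h}`. The point at height `t` of the suspension
segment through `w` goes to `(t, t(1-t) w)`, which collapses exactly the two ends. Both sides are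
compact and the target is Hausdorff, so both continuous bijections onto the image are
homeomorphisms.
-/

open Function Set

lemma sum_update_eq {ι : Type*} [Fintype ι] [DecidableEq ι] (f : ι → ℝ) (i : ι) (b : ℝ) :
    ∑ x, update f i b x = ∑ x, f x - f i + b := by
  rw [Finset.sum_update_of_mem (Finset.mem_univ i),
    Finset.sum_eq_add_sum_sdiff_singleton_of_mem (Finset.mem_univ i) f]
  ring

lemma update_eq_zero_of_apply_eq_one {ι : Type*} [Fintype ι] [DecidableEq ι] {f : ι → ℝ}
    (hf : f ∈ stdSimplex ℝ ι) {i : ι} (hfi : f i = 1) : update f i 0 = 0 := by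
  have hsum : ∑ x, update f i 0 x = 0 := by rw [sum_update_eq, hf.2, hfi]; ring
  have hnonneg : ∀ x ∈ Finset.univ, 0 ≤ update f i 0 x := fun x _ => by
    obtain rfl | hx := eq_or_ne x i
    · simp
    · simpa [update_of_ne hx] using hf.1 x
  funext x
  exact (Finset.sum_eq_zero_iff_of_nonneg hnonneg).mp hsum x (Finset.mem_univ x)

lemma eq_of_apply_eq_of_smul_update_eq {ι : Type*} [DecidableEq ι] {f g : ι → ℝ} {i : ι}
    (h1 : f i = g i) (hne : f i ≠ 0) (h2 : f i • update f i 0 = g i • update g i 0) :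
    f = g := by
  funext x
  obtain rfl | hx := eq_or_ne x i
  · exact h1
  · have := congrFun h2 x
    simp only [Pi.smul_apply, smul_eq_mul, update_of_ne hx, ← h1] at this
    exact mul_left_cancel₀ hne this

section OrderComplex

variable {P : Type} [Preorder P]

lemma mem_ocSet_iff [Fintype P] {S : Set P} {f : P → ℝ} :
    f ∈ ocSet P S ↔
      f ∈ stdSimplex ℝ P ∧ support f ⊆ S ∧ IsChain (· ≤ ·) (support f) := by
  simp only [ocSet, stdSimplex, mem_ofPred_eq, finsum_eq_sum_of_fintype, toFinite, true_and,
    and_assoc]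

lemma ocSet_eq_stdSimplex_inter [Fintype P] (S : Set P) :
    ocSet P S = stdSimplex ℝ P ∩
      ⋂ (x) (y) (_ : ¬ (x ∈ S ∧ (x ≤ y ∨ y ≤ x))), {f | f x * f y = 0} := by
  ext f
  simp only [mem_ocSet_iff, mem_inter_iff, mem_iInter, mem_ofPred_eq]
  refine and_congr_right fun _ =>
    ⟨fun ⟨hS, hchain⟩ x y hxy => ?_, fun H => ⟨fun x hx => ?_, ?_⟩⟩
  · by_contra hne
    obtain ⟨hx, hy⟩ := mul_ne_zero_iff.mp hne
    refine hxy ⟨hS hx, ?_⟩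
    obtain rfl | hxy' := eq_or_ne x y
    · exact Or.inl le_rfl
    · exact hchain hx hy hxy'
  · by_contra hxS
    exact mul_self_ne_zero.mpr hx (H x x fun h => hxS h.1)
  · intro x hx y hy _
    by_contra hcomp
    exact mul_ne_zero hx hy (H x y fun h => hcomp h.2)

lemma isCompact_ocSet [Finite P] (S : Set P) : IsCompact (ocSet P S) := by
  have := Fintype.ofFinite P
  rw [ocSet_eq_stdSimplex_inter]
  exact (isCompact_stdSimplex ℝ P).inter_right <| isClosed_iInter fun x =>
    isClosed_iInter fun y => isClosed_iInter fun _ => isClosed_eq (by fun_prop) continuous_const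

instance [Finite P] (S : Set P) : CompactSpace (ΔSp S) :=
  isCompact_iff_compactSpace.mp (isCompact_ocSet S)

lemma nonempty_ΔSp [Finite P] {S : Set P} (hS : S.Nonempty) : Nonempty (ΔSp S) := by
  classical
  have := Fintype.ofFinite P
  obtain ⟨x, hx⟩ := hS
  refine ⟨⟨Pi.single x 1, mem_ocSet_iff.mpr ⟨single_mem_stdSimplex ℝ x, ?_, ?_⟩⟩⟩
  · exact (Pi.support_single_subset).trans (singleton_subset_iff.mpr hx)
  · exact (subsingleton_singleton.anti Pi.support_single_subset).isChain

lemma apply_eq_zero_of_mem_ocSet {S : Set P} {f : P → ℝ} (hf : f ∈ ocSet P S) {x : P}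
    (hx : x ∉ S) : f x = 0 :=
  notMem_support.mp fun h => hx (hf.2.2.2.1 h)

lemma mem_ocSet_of_apply_eq_zero {L : Set P} {h : P} {f : P → ℝ}
    (hf : f ∈ ocSet P (L ∪ {h})) (hfh : f h = 0) : f ∈ ocSet P L :=
  ⟨hf.1, hf.2.1, hf.2.2.1,
    fun _ hx => (hf.2.2.2.1 hx).resolve_right fun hxh => hx (hxh ▸ hfh), hf.2.2.2.2⟩

end OrderComplex

section VertexLink

variable {P : Type} [Preorder P]

/-- For `h ∉ L`, `Δ (vertexLink L h)` is the link of the vertex `h` in `Δ (L ∪ {h})`. -/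
def vertexLink (L : Set P) (h : P) : Set P := {x ∈ L | x ≤ h ∨ h ≤ x}

lemma smul_update_mem_ocSet_vertexLink [Finite P] [DecidableEq P] {L : Set P} {h : P}
    {f : P → ℝ} (hf : f ∈ ocSet P (L ∪ {h})) (hpos : 0 < f h) (hlt : f h < 1) :
    (1 - f h)⁻¹ • update f h 0 ∈ ocSet P (vertexLink L h) := by
  have := Fintype.ofFinite P
  obtain ⟨hΔ, hS, hchain⟩ := mem_ocSet_iff.mp hf
  have hsupp : support ((1 - f h)⁻¹ • update f h 0) ⊆ support f \ {h} :=
    (support_const_smul_subset _ _).trans (support_update_zero f h).subset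
  refine mem_ocSet_iff.mpr
    ⟨⟨fun x => ?_, ?_⟩, fun x hx => ?_, hchain.mono (hsupp.trans sdiff_subset)⟩
  · have : 0 ≤ update f h 0 x := by
      obtain rfl | hx := eq_or_ne x h
      · simp
      · simpa [update_of_ne hx] using hΔ.1 x
    exact mul_nonneg (inv_nonneg.mpr (by linarith)) this
  · simp only [Pi.smul_apply, smul_eq_mul, ← Finset.mul_sum, sum_update_eq, hΔ.2, add_zero]
    exact inv_mul_cancel₀ (sub_pos.mpr hlt).ne'
  · obtain ⟨hxf, hxh⟩ := hsupp hx
    exact ⟨(hS hxf).resolve_right hxh, hchain hxf (show h ∈ support f from hpos.ne') hxh⟩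

lemma update_smul_mem_ocSet [Finite P] [DecidableEq P] {L : Set P} {h : P} (hL : h ∉ L)
    {t : ℝ} (ht : t ∈ Icc (0 : ℝ) 1) {w : P → ℝ} (hw : w ∈ ocSet P (vertexLink L h)) :
    update ((1 - t) • w) h t ∈ ocSet P (L ∪ {h}) := by
  have := Fintype.ofFinite P
  obtain ⟨hΔ, hS, hchain⟩ := mem_ocSet_iff.mp hw
  have hwh : w h = 0 := apply_eq_zero_of_mem_ocSet hw fun hh => hL hh.1
  have hsupp : support (update ((1 - t) • w) h t) ⊆ insert h (support w) := fun x hx => by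
    obtain rfl | hxh := eq_or_ne x h
    · exact mem_insert x _
    · rw [mem_support, update_of_ne hxh, Pi.smul_apply, smul_eq_mul] at hx
      exact mem_insert_of_mem _ (right_ne_zero_of_mul hx)
  refine mem_ocSet_iff.mpr ⟨⟨fun x => ?_, ?_⟩, hsupp.trans ?_,
    (hchain.insert fun x hx _ => (hS hx).2.symm).mono hsupp⟩
  · obtain rfl | hxh := eq_or_ne x h
    · simpa using ht.1
    · simpa [update_of_ne hxh] using mul_nonneg (sub_nonneg.mpr ht.2) (hΔ.1 x)
  · simp only [sum_update_eq, Pi.smul_apply, smul_eq_mul, ← Finset.mul_sum, hΔ.2, hwh]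
    ring
  · exact insert_subset_iff.mpr ⟨Or.inr rfl, fun x hx => Or.inl (hS hx).1⟩

end VertexLink

noncomputable def Quot.homeomorphRange {X Z : Type*} [TopologicalSpace X] [CompactSpace X]
    [TopologicalSpace Z] [T2Space Z] {r : X → X → Prop} {g : X → Z} (hg : Continuous g)
    (hr : ∀ a b, r a b → g a = g b) (hfib : ∀ a b, g a = g b → Quot.mk r a = Quot.mk r b) :
    Quot r ≃ₜ range g :=
  let lift : Quot r → range g :=
    Quot.lift (rangeFactorization g) fun a b hab => Subtype.ext (hr a b hab)
  have hinj : Injective lift := fun q q' => by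
    induction q using Quot.ind
    induction q' using Quot.ind
    exact fun heq => hfib _ _ (congrArg Subtype.val heq)
  have hsurj : Surjective lift := fun ⟨_, a, ha⟩ => ⟨Quot.mk r a, Subtype.ext ha⟩
  Continuous.homeoOfEquivCompactToT2 (f := Equiv.ofBijective lift ⟨hinj, hsurj⟩)
    (continuous_quot_lift _ hg.rangeFactorization)

lemma QuotBy.mk_eq_base {X : Type} [TopologicalSpace X] {A : Set X} {x : X} (hx : x ∈ A) :
    (Quot.mk _ (Sum.inl x) : QuotBy X A) = Quot.mk _ (Sum.inr ()) :=
  Quot.sound ⟨⟨x, hx, rfl⟩, rfl⟩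

lemma TopJoin.mk_zero {X Y : Type} [TopologicalSpace X] [TopologicalSpace Y] (x : X) (y : Y) :
    (Quot.mk _ (Sum.inl (Sum.inr (x, 0, y))) : TopJoin X Y) =
      Quot.mk _ (Sum.inl (Sum.inl x)) :=
  Quot.sound (Or.inl ⟨x, y, rfl, rfl⟩)

lemma TopJoin.mk_one {X Y : Type} [TopologicalSpace X] [TopologicalSpace Y] (x : X) (y : Y) :
    (Quot.mk _ (Sum.inl (Sum.inr (x, 1, y))) : TopJoin X Y) = Quot.mk _ (Sum.inr y) :=
  Quot.sound (Or.inr ⟨x, y, rfl, rfl⟩)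

lemma TopJoin.exists_mk_eq_mk_segment {X Y : Type} [TopologicalSpace X] [TopologicalSpace Y]
    [Nonempty X] [Nonempty Y] (a : (X ⊕ X × unitInterval × Y) ⊕ Y) :
    ∃ x s y, (Quot.mk _ a : TopJoin X Y) = Quot.mk _ (Sum.inl (Sum.inr (x, s, y))) := by
  obtain ⟨x₀⟩ := ‹Nonempty X›
  obtain ⟨y₀⟩ := ‹Nonempty Y›
  rcases a with (x | ⟨x, s, y⟩) | y
  · exact ⟨x, 0, y₀, (TopJoin.mk_zero x y₀).symm⟩
  · exact ⟨x, s, y, rfl⟩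
  · exact ⟨x₀, 1, y, (TopJoin.mk_one x₀ y).symm⟩

section SuspensionModel

variable {Q : Type}

noncomputable def suspPoint (t : ℝ) (w : Q → ℝ) : ℝ × (Q → ℝ) :=
  (t, (t * (1 - t)) • w)

def suspModel (Y : Set (Q → ℝ)) : Set (ℝ × (Q → ℝ)) :=
  uncurry suspPoint '' (Icc 0 1 ×ˢ Y)

lemma suspPoint_eq_suspPoint_iff {t t' : ℝ} {w w' : Q → ℝ} :
    suspPoint t w = suspPoint t' w' ↔ t = t' ∧ (t * (1 - t) = 0 ∨ w = w') := by
  simp only [suspPoint, Prod.mk.injEq]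
  constructor
  · rintro ⟨rfl, hw⟩
    exact ⟨rfl, or_iff_not_imp_left.mpr fun ht => smul_right_injective _ ht hw⟩
  · rintro ⟨rfl, ht | rfl⟩
    · simp [ht]
    · exact ⟨rfl, rfl⟩

lemma continuous_suspPoint {X : Type} [TopologicalSpace X] {t : X → ℝ} {w : X → Q → ℝ}
    (ht : Continuous t) (hw : Continuous w) : Continuous fun x => suspPoint (t x) (w x) := by
  unfold suspPoint
  fun_prop

/-- Height in `[0, 1]` of the point at parameter `s` on a segment of `Susp` that starts at the
apex `b` (`s = 0`) and ends on the equator (`s = 1`). -/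
noncomputable def segmentHeight : Bool → ℝ → ℝ
  | false, s => s / 2
  | true, s => 1 - s / 2

lemma continuous_segmentHeight (b : Bool) : Continuous (segmentHeight b) := by
  cases b
  exacts [continuous_id.div_const 2, continuous_const.sub (continuous_id.div_const 2)]

lemma segmentHeight_mem_Icc (b : Bool) (s : unitInterval) :
    segmentHeight b s ∈ Icc (0 : ℝ) 1 := by
  obtain ⟨hs0, hs1⟩ := s.2
  cases b <;> constructor <;> simp only [segmentHeight] <;> linarith

lemma segmentHeight_zero_mul (b : Bool) : segmentHeight b 0 * (1 - segmentHeight b 0) = 0 := by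
  cases b <;> norm_num [segmentHeight]

lemma segmentHeight_one (b : Bool) : segmentHeight b 1 = 1 / 2 := by
  cases b <;> norm_num [segmentHeight]

lemma eq_zero_of_segmentHeight_mul_eq_zero {b : Bool} {s : unitInterval}
    (hs : segmentHeight b s * (1 - segmentHeight b s) = 0) : s = 0 := by
  obtain ⟨hs0, hs1⟩ := s.2
  ext
  cases b <;> simp only [segmentHeight, mul_eq_zero] at hs <;> push_cast <;>
    rcases hs with hs | hs <;> linarith

lemma segmentHeight_eq_segmentHeight {b b' : Bool} {s s' : unitInterval}
    (h : segmentHeight b s = segmentHeight b' s') : (b = b' ∧ s = s') ∨ (s = 1 ∧ s' = 1) := by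
  obtain ⟨hs0, hs1⟩ := s.2
  obtain ⟨hs0', hs1'⟩ := s'.2
  cases b <;> cases b' <;> simp only [segmentHeight] at h
  · exact Or.inl ⟨rfl, Subtype.ext (by linarith)⟩
  · exact Or.inr ⟨Subtype.ext (by push_cast; linarith), Subtype.ext (by push_cast; linarith)⟩
  · exact Or.inr ⟨Subtype.ext (by push_cast; linarith), Subtype.ext (by push_cast; linarith)⟩
  · exact Or.inl ⟨rfl, Subtype.ext (by linarith)⟩

noncomputable def suspToModel (Y : Set (Q → ℝ)) :
    (Bool ⊕ Bool × unitInterval × Y) ⊕ Y → ℝ × (Q → ℝ) :=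
  Sum.elim (Sum.elim (fun b => suspPoint (segmentHeight b 0) 0)
    fun p => suspPoint (segmentHeight p.1 p.2.1) p.2.2) fun y => suspPoint (1 / 2) y

variable (Y : Set (Q → ℝ))

lemma continuous_suspToModel : Continuous (suspToModel Y) := by
  refine .sumElim (.sumElim continuous_of_discreteTopology ?_) ?_
  · exact continuous_prod_of_discrete_left.mpr fun b => continuous_suspPoint
      ((continuous_segmentHeight b).comp (continuous_subtype_val.comp continuous_fst))
      (continuous_subtype_val.comp continuous_snd)
  · exact continuous_suspPoint continuous_const continuous_subtype_val

lemma suspToModel_eq_of_rel :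
    ∀ a a', ((∃ x y, a = Sum.inl (Sum.inr (x, 0, y)) ∧ a' = Sum.inl (Sum.inl x)) ∨
      (∃ x y, a = Sum.inl (Sum.inr (x, 1, y)) ∧ a' = Sum.inr y)) →
      suspToModel Y a = suspToModel Y a' := by
  rintro _ _ (⟨b, y, rfl, rfl⟩ | ⟨b, y, rfl, rfl⟩)
  · exact suspPoint_eq_suspPoint_iff.mpr
      ⟨rfl, Or.inl (by exact_mod_cast segmentHeight_zero_mul b)⟩
  · simp [suspToModel, segmentHeight_one]

lemma suspToModel_eq_of_mk_eq {a a' : (Bool ⊕ Bool × unitInterval × Y) ⊕ Y}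
    (h : (Quot.mk _ a : Susp Y) = Quot.mk _ a') : suspToModel Y a = suspToModel Y a' :=
  congrArg (Quot.lift _ (suspToModel_eq_of_rel Y)) h

lemma mk_segment_eq_of_suspPoint_eq {b b' : Bool} {s s' : unitInterval} {y y' : Y}
    (heq : suspPoint (segmentHeight b s) (y : Q → ℝ) = suspPoint (segmentHeight b' s') y') :
    (Quot.mk _ (Sum.inl (Sum.inr (b, s, y))) : Susp Y) =
      Quot.mk _ (Sum.inl (Sum.inr (b', s', y'))) := by
  obtain ⟨hheight, hw⟩ := suspPoint_eq_suspPoint_iff.mp heq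
  rcases segmentHeight_eq_segmentHeight hheight with ⟨rfl, rfl⟩ | ⟨rfl, rfl⟩
  · rcases hw with hs | hy
    · rw [eq_zero_of_segmentHeight_mul_eq_zero hs, TopJoin.mk_zero, TopJoin.mk_zero]
    · rw [Subtype.ext hy]
  · have hy : y = y' :=
      Subtype.ext (hw.resolve_left (by push_cast [segmentHeight_one]; norm_num))
    rw [hy, TopJoin.mk_one, TopJoin.mk_one]

lemma mk_eq_of_suspToModel_eq [Nonempty Y] {a a' : (Bool ⊕ Bool × unitInterval × Y) ⊕ Y}
    (heq : suspToModel Y a = suspToModel Y a') : (Quot.mk _ a : Susp Y) = Quot.mk _ a' := by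
  obtain ⟨b, s, y, ha⟩ := TopJoin.exists_mk_eq_mk_segment a
  obtain ⟨b', s', y', ha'⟩ := TopJoin.exists_mk_eq_mk_segment a'
  rw [ha, ha']
  exact mk_segment_eq_of_suspPoint_eq Y
    ((suspToModel_eq_of_mk_eq Y ha).symm.trans (heq.trans (suspToModel_eq_of_mk_eq Y ha')))

lemma range_suspToModel [Nonempty Y] : range (suspToModel Y) = suspModel Y := by
  refine Subset.antisymm ?_ ?_
  · rintro _ ⟨a, rfl⟩
    obtain ⟨b, s, y, ha⟩ := TopJoin.exists_mk_eq_mk_segment a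
    rw [suspToModel_eq_of_mk_eq Y ha]
    exact ⟨(segmentHeight b s, y), ⟨segmentHeight_mem_Icc b s, y.2⟩, rfl⟩
  · rintro _ ⟨⟨t, w⟩, ⟨⟨ht0, ht1⟩, hw⟩, rfl⟩
    by_cases ht : t ≤ 1 / 2
    · refine ⟨Sum.inl (Sum.inr
        (false, ⟨2 * t, by constructor <;> linarith⟩, ⟨w, hw⟩)), ?_⟩
      simp [suspToModel, segmentHeight]
    · refine ⟨Sum.inl (Sum.inr
        (true, ⟨2 * (1 - t), by constructor <;> linarith⟩, ⟨w, hw⟩)), ?_⟩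
      simp [suspToModel, segmentHeight]

noncomputable def suspHomeomorphSuspModel [Nonempty Y] [CompactSpace Y] :
    Susp Y ≃ₜ suspModel Y :=
  (Quot.homeomorphRange (continuous_suspToModel Y) (suspToModel_eq_of_rel Y)
    fun _ _ => mk_eq_of_suspToModel_eq Y).trans (Homeomorph.setCongr (range_suspToModel Y))

end SuspensionModel

section ConeModel

variable {P : Type} [Preorder P]

abbrev ΔQuot (L : Set P) (h : P) : Type :=
  QuotBy (ΔSp (L ∪ {h})) {f : ΔSp (L ∪ {h}) | (f : P → ℝ) ∈ ocSet P L}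

lemma ΔQuot.mk_eq_base {L : Set P} {h : P} {f : ΔSp (L ∪ {h})} (hf : (f : P → ℝ) h = 0) :
    (Quot.mk _ (Sum.inl f) : ΔQuot L h) = Quot.mk _ (Sum.inr ()) :=
  QuotBy.mk_eq_base (mem_ocSet_of_apply_eq_zero f.2 hf)

variable [DecidableEq P] (L : Set P) (h : P)

noncomputable def quotByToSuspModel : ΔSp (L ∪ {h}) ⊕ Unit → ℝ × (P → ℝ) :=
  Sum.elim (fun f => ((f : P → ℝ) h, (f : P → ℝ) h • update (f : P → ℝ) h 0))
    fun _ => 0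

lemma continuous_quotByToSuspModel : Continuous (quotByToSuspModel L h) := by
  refine .sumElim ?_ continuous_const
  have hh : Continuous fun f : ΔSp (L ∪ {h}) => (f : P → ℝ) h :=
    (continuous_apply h).comp continuous_subtype_val
  exact hh.prodMk (hh.smul (continuous_subtype_val.update h continuous_const))

variable {L h}

lemma quotByToSuspModel_eq_of_rel (hL : h ∉ L) :
    ∀ a a', ((∃ x ∈ {f : ΔSp (L ∪ {h}) | (f : P → ℝ) ∈ ocSet P L}, a = Sum.inl x) ∧
      a' = Sum.inr ()) → quotByToSuspModel L h a = quotByToSuspModel L h a' := by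
  rintro _ _ ⟨⟨f, hf, rfl⟩, rfl⟩
  simp [quotByToSuspModel, apply_eq_zero_of_mem_ocSet hf hL]

lemma mk_eq_of_quotByToSuspModel_eq {a a' : ΔSp (L ∪ {h}) ⊕ Unit}
    (heq : quotByToSuspModel L h a = quotByToSuspModel L h a') :
    (Quot.mk _ a : ΔQuot L h) = Quot.mk _ a' := by
  rcases a with f | ⟨⟩ <;> rcases a' with g | ⟨⟩ <;>
    simp only [quotByToSuspModel, Sum.elim_inl, Sum.elim_inr, Prod.ext_iff, Prod.fst_zero,
      Prod.snd_zero] at heq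
  · obtain ⟨h1, h2⟩ := heq
    by_cases hf : (f : P → ℝ) h = 0
    · rw [ΔQuot.mk_eq_base hf, ΔQuot.mk_eq_base (h1 ▸ hf)]
    · rw [Subtype.ext (eq_of_apply_eq_of_smul_update_eq h1 hf h2)]
  · exact ΔQuot.mk_eq_base heq.1
  · exact (ΔQuot.mk_eq_base heq.1.symm).symm
  · rfl

lemma range_quotByToSuspModel [Finite P] (hL : h ∉ L) [Nonempty (ΔSp (vertexLink L h))] :
    range (quotByToSuspModel L h) = suspModel (ocSet P (vertexLink L h)) := by
  have := Fintype.ofFinite P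
  obtain ⟨w₀, hw₀⟩ := ‹Nonempty (ΔSp (vertexLink L h))›
  refine Subset.antisymm ?_ ?_
  · have hbase : (0 : ℝ × (P → ℝ)) ∈ suspModel (ocSet P (vertexLink L h)) :=
      ⟨(0, w₀), ⟨⟨le_rfl, zero_le_one⟩, hw₀⟩, by simp [suspPoint]⟩
    rintro _ ⟨f | ⟨⟩, rfl⟩
    · obtain ⟨hΔ, -⟩ := mem_ocSet_iff.mp f.2
      obtain ⟨h0, h1⟩ := mem_Icc_of_mem_stdSimplex hΔ h
      rcases h0.eq_or_lt with h0 | h0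
      · convert hbase using 1
        simp [quotByToSuspModel, ← h0]
      rcases h1.eq_or_lt with h1 | h1
      · refine ⟨(1, w₀), ⟨⟨zero_le_one, le_rfl⟩, hw₀⟩, ?_⟩
        simp [suspPoint, quotByToSuspModel, h1, update_eq_zero_of_apply_eq_one hΔ h1]
      · refine ⟨((f : P → ℝ) h, (1 - (f : P → ℝ) h)⁻¹ • update (f : P → ℝ) h 0),
          ⟨⟨h0.le, h1.le⟩, smul_update_mem_ocSet_vertexLink f.2 h0 h1⟩, ?_⟩
        simp [suspPoint, quotByToSuspModel, smul_smul, (sub_pos.mpr h1).ne']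
    · exact hbase
  · rintro _ ⟨⟨t, w⟩, ⟨ht, hw⟩, rfl⟩
    have hwh : w h = 0 := apply_eq_zero_of_mem_ocSet hw fun hh => hL hh.1
    refine ⟨Sum.inl ⟨_, update_smul_mem_ocSet hL ht hw⟩, ?_⟩
    have hupdate : update ((1 - t) • w) h 0 = (1 - t) • w :=
      update_eq_self_iff.mpr (by simp [hwh])
    simp [quotByToSuspModel, suspPoint, hupdate, smul_smul]

noncomputable def ΔQuot.homeomorphSuspModel [Finite P] (hL : h ∉ L)
    [Nonempty (ΔSp (vertexLink L h))] : ΔQuot L h ≃ₜ suspModel (ocSet P (vertexLink L h)) :=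
  (Quot.homeomorphRange (continuous_quotByToSuspModel L h) (quotByToSuspModel_eq_of_rel hL)
    fun _ _ => mk_eq_of_quotByToSuspModel_eq).trans
    (Homeomorph.setCongr (range_quotByToSuspModel hL))

noncomputable def ΔQuot.homeomorphSuspVertexLink [Finite P] (hL : h ∉ L)
    [Nonempty (ΔSp (vertexLink L h))] : ΔQuot L h ≃ₜ Susp (ΔSp (vertexLink L h)) :=
  (ΔQuot.homeomorphSuspModel hL).trans (suspHomeomorphSuspModel _).symm

end ConeModel

section Levels

variable {P : Type} [PartialOrder P] {k : ℕ} {h : P}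

lemma notMem_levelLE_of_mem_level_succ (hh : h ∈ level P (k + 1)) : h ∉ levelLE P k := by
  simp only [levelLE, level, mem_ofPred_eq] at hh ⊢
  rw [hh]
  exact_mod_cast Nat.not_succ_le_self k

lemma vertexLink_levelLE_eq_Iio (hh : h ∈ level P (k + 1)) :
    vertexLink (levelLE P k) h = Iio h := by
  have hh' : Order.height h = k + 1 := by exact_mod_cast hh
  ext x
  refine ⟨fun ⟨hx, hxh⟩ => ?_, fun hxh => ⟨?_, Or.inl hxh.le⟩⟩
  · rcases hxh with hxh | hhx
    · exact hxh.lt_of_ne fun hxh => notMem_levelLE_of_mem_level_succ hh (hxh ▸ hx)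
    · have : (k : ℕ∞) + 1 ≤ k := hh' ▸ (Order.height_mono hhx).trans hx
      exact absurd this (by exact_mod_cast Nat.not_succ_le_self k)
  · have hlt := Order.height_strictMono hxh
      ((Order.height_mono hxh.le).trans_lt (hh' ▸ ENat.natCast_lt_top (k + 1)))
    rw [hh'] at hlt
    exact Order.le_of_lt_add_one hlt

lemma nonempty_Iio_of_mem_level_succ (hh : h ∈ level P (k + 1)) : (Iio h).Nonempty := by
  refine not_isMin_iff.mp fun hmin => ?_
  have : Order.height h = 0 := Order.height_eq_zero.mpr hmin
  simp only [level, mem_ofPred_eq, this] at hh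
  exact Nat.succ_ne_zero k (by exact_mod_cast hh.symm)

end Levels

/-- **Lemma `nadstrojka1`.** Let `P` be a finite poset, `k ≥ 0`, `h ∈ P^{k+1}`,
and `X_h = Δ(P^{≤k} ∪ {h})`. Then `X_h / ΔP^{≤k} = Σ ΔP_{<h}`. -/
theorem quotient_orderComplex_homeo_susp
    (P : Type) [PartialOrder P] [Finite P] (k : ℕ) (h : P)
    (hh : h ∈ level P (k + 1)) :
    Nonempty
      (QuotBy (ΔSp (levelLE P k ∪ {h}))
          {f : ΔSp (levelLE P k ∪ {h}) | (f : P → ℝ) ∈ ocSet P (levelLE P k)} ≃ₜ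
        Susp (ΔSp (Set.Iio h))) := by
  classical
  have hlink := vertexLink_levelLE_eq_Iio hh
  have : Nonempty (ΔSp (vertexLink (levelLE P k) h)) :=
    hlink ▸ nonempty_ΔSp (nonempty_Iio_of_mem_level_succ hh)
  rw [← hlink]
  exact ⟨ΔQuot.homeomorphSuspVertexLink (notMem_levelLE_of_mem_level_succ hh)⟩
end
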